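/- Let n = m + k, g : ℝ^n → Sym(n,ℝ) a C¹ field of symmetric matrices, α_ν : ℝ^n × ℝ^m → ℝ C² functions (ν = 1,…,k), and define T(q, w) = (1/2) Σ_{i,j=1}^n g_{i,j}(q) w_i w_j and T*(q,u) = T(q, u, α(q,u)). Along any C² curve (q(t), u(t)) with q̇_j = u_j (j ≤ m) and q̇_{m+σ} = α_σ(q,u), the combination d/dt(∂T*/∂u_i) − ∂T*/∂q_i − Σ_{ν=1}^k (∂T*/∂q_{m+ν})(∂α_ν/∂u_i) − Σ_{ν=1}^k (∂T/∂q̇_{m+ν})|_{q̇=(u,α)} · B_i^ν equals d/dt(∂T/∂q̇_i) − ∂T/∂q_i + Σ_{ν=1}^k (∂α_ν/∂u_i)( d/dt(∂T/∂q̇_{m+ν}) − ∂T/∂q_{m+ν} ), all derivatives of T evaluated along q̇ = (u, α(q,u)); here B_i^ν = Σ_{r=1}^m (∂²α_ν/∂u_i∂q_r u_r + ∂²α_ν/∂u_i∂u_r u̇_r) − ∂α_ν/∂q_i + Σ_{σ=1}^k (∂²α_ν/∂u_i∂q_{m+σ} α_σ − (∂α_σ/∂u_i)(∂α_ν/∂q_{m+σ})).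 -/

import Mathlib

/-!
By the chain rule, `∂T*/∂u_i = ∂T/∂q̇_i + Σ_ν (∂α_ν/∂u_i) ∂T/∂q̇_{m+ν}` and
`∂T*/∂q_l = ∂T/∂q_l + Σ_ν (∂α_ν/∂q_l) ∂T/∂q̇_{m+ν}`, all derivatives of `T` taken at
`q̇ = (u, α(q, u))`. Differentiating the first identity along the motion produces the terms
`(d/dt ∂α_ν/∂u_i) ∂T/∂q̇_{m+ν}`; since `q̇ = (u, α)`, the total derivative `d/dt ∂α_ν/∂u_i` is the
first sum in `B_i^ν`, and the other terms of `B_i^ν` cancel the `α`-contributions to `∂T*/∂q`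
once the two sums over constraint indices are exchanged. Only the differentiability of `T` and of
its velocity derivatives along the motion enters; for the kinetic energy the latter holds because
`∂T/∂q̇_l = ½ Σ_j (g_lj + g_jl) q̇_j`.
-/

open Finset

theorem ContinuousLinearMap.apply_eq_sum_mul_apply_single {ι : Type*} [Fintype ι]
    [DecidableEq ι] (L : (ι → ℝ) →L[ℝ] ℝ) (w : ι → ℝ) :
    L w = ∑ l, w l * L (Pi.single l 1) := by
  conv_lhs => rw [← Finset.univ_sum_single w]
  simp only [map_sum]
  refine sum_congr rfl fun l _ => ?_
  rw [← smul_eq_mul, ← map_smul, ← Pi.single_smul, smul_eq_mul, mul_one]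

namespace Voronec

section Partials

variable {E F : Type*} [NormedAddCommGroup E] [NormedSpace ℝ E] [NormedAddCommGroup F]
  [NormedSpace ℝ F] {ι κ : Type*} [Fintype ι] [Fintype κ]

theorem fderiv_snd_apply_apply (p h : E × (κ → ℝ)) (l : κ) :
    fderiv ℝ (fun p : E × (κ → ℝ) => p.2 l) p h = h.2 l := by
  rw [fderiv_apply (Φ := Prod.snd) differentiableAt_snd, fderiv_snd]
  rfl

variable [DecidableEq ι] [DecidableEq κ]

noncomputable def partialFst (f : (ι → ℝ) × F → ℝ) (p : (ι → ℝ) × F) (l : ι) : ℝ :=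
  fderiv ℝ f p (Pi.single l 1, 0)

noncomputable def partialSnd (f : E × (κ → ℝ) → ℝ) (p : E × (κ → ℝ)) (l : κ) : ℝ :=
  fderiv ℝ f p (0, Pi.single l 1)

theorem fderiv_apply_eq_sum_partial (f : (ι → ℝ) × (κ → ℝ) → ℝ) (p h : (ι → ℝ) × (κ → ℝ)) :
    fderiv ℝ f p h = ∑ l, h.1 l * partialFst f p l + ∑ l, h.2 l * partialSnd f p l := by
  set L := fderiv ℝ f p
  calc L h = L.comp (.inl ℝ _ _) h.1 + L.comp (.inr ℝ _ _) h.2 := by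
        simp [← map_add]
    _ = _ := by
        rw [ContinuousLinearMap.apply_eq_sum_mul_apply_single (L.comp _),
          ContinuousLinearMap.apply_eq_sum_mul_apply_single (L.comp (.inr ℝ _ _))]
        rfl

end Partials

theorem cancellation {k : ℕ} (dP₀ Tq₀ : ℝ) (a da P dP c Tq : Fin k → ℝ)
    (β : Fin k → Fin k → ℝ) :
    dP₀ + ∑ σ, (da σ * P σ + a σ * dP σ) - (Tq₀ + ∑ σ, c σ * P σ)
        - ∑ ν, (Tq ν + ∑ σ, β σ ν * P σ) * a ν
        - ∑ ν, P ν * (da ν - c ν - ∑ σ, a σ * β ν σ)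
      = dP₀ - Tq₀ + ∑ ν, a ν * (dP ν - Tq ν) := by
  have hswap : ∑ ν, (∑ σ, β σ ν * P σ) * a ν = ∑ ν, P ν * ∑ σ, a σ * β ν σ := by
    simp only [sum_mul, mul_sum]
    rw [sum_comm]
    exact sum_congr rfl fun _ _ => sum_congr rfl fun _ _ => by ring
  have hP : ∀ x : Fin k → ℝ, ∑ ν, P ν * x ν = ∑ ν, x ν * P ν :=
    fun x => sum_congr rfl fun _ _ => mul_comm _ _
  have hTq : ∑ ν, Tq ν * a ν = ∑ ν, a ν * Tq ν := sum_congr rfl fun _ _ => mul_comm _ _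
  simp only [add_mul, mul_sub, sum_add_distrib, sum_sub_distrib]
  linear_combination -hswap - hP da + hP c - hTq

section Constraints

variable {m k : ℕ}

def constrainedState (α : Fin k → (Fin (m + k) → ℝ) × (Fin m → ℝ) → ℝ)
    (p : (Fin (m + k) → ℝ) × (Fin m → ℝ)) : (Fin (m + k) → ℝ) × (Fin (m + k) → ℝ) :=
  (p.1, Fin.append p.2 fun ν => α ν p)

/-- `T*` in the paper's notation. -/
def reduced (T : (Fin (m + k) → ℝ) × (Fin (m + k) → ℝ) → ℝ)
    (α : Fin k → (Fin (m + k) → ℝ) × (Fin m → ℝ) → ℝ) : (Fin (m + k) → ℝ) × (Fin m → ℝ) → ℝ :=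
  T ∘ constrainedState α

variable {α : Fin k → (Fin (m + k) → ℝ) × (Fin m → ℝ) → ℝ}

theorem differentiableAt_append_constraints {p : (Fin (m + k) → ℝ) × (Fin m → ℝ)}
    (hα : ∀ ν, DifferentiableAt ℝ (α ν) p) (j : Fin (m + k)) :
    DifferentiableAt ℝ (fun p => Fin.append p.2 (fun ν => α ν p) j) p := by
  induction j using Fin.addCases with
  | left r => simp only [Fin.append_left]; fun_prop
  | right ν => simpa only [Fin.append_right] using hα ν

theorem differentiableAt_constrainedState {p : (Fin (m + k) → ℝ) × (Fin m → ℝ)}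
    (hα : ∀ ν, DifferentiableAt ℝ (α ν) p) : DifferentiableAt ℝ (constrainedState α) p :=
  differentiableAt_fst.prodMk (differentiableAt_pi.2 (differentiableAt_append_constraints hα))

theorem fderiv_constrainedState_apply {p : (Fin (m + k) → ℝ) × (Fin m → ℝ)}
    (hα : ∀ ν, DifferentiableAt ℝ (α ν) p) (h : (Fin (m + k) → ℝ) × (Fin m → ℝ)) :
    fderiv ℝ (constrainedState α) p h = (h.1, Fin.append h.2 fun ν => fderiv ℝ (α ν) p h) := by
  change fderiv ℝ (fun p => (p.1, Fin.append p.2 fun ν => α ν p)) p h = _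
  rw [DifferentiableAt.fderiv_prodMk differentiableAt_fst
    (differentiableAt_pi.2 (differentiableAt_append_constraints hα)),
    fderiv_pi (differentiableAt_append_constraints hα)]
  ext j
  · simp [fderiv_fst]
  · induction j using Fin.addCases with
    | left r => simp [fderiv_snd_apply_apply]
    | right ν => simp

theorem fderiv_reduced_apply {T : (Fin (m + k) → ℝ) × (Fin (m + k) → ℝ) → ℝ}
    {p : (Fin (m + k) → ℝ) × (Fin m → ℝ)} (hT : DifferentiableAt ℝ T (constrainedState α p))
    (hα : ∀ ν, DifferentiableAt ℝ (α ν) p) (h : (Fin (m + k) → ℝ) × (Fin m → ℝ)) :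
    fderiv ℝ (reduced T α) p h =
      ∑ l, h.1 l * partialFst T (constrainedState α p) l
        + ∑ r, h.2 r * partialSnd T (constrainedState α p) (Fin.castAdd k r)
        + ∑ ν, fderiv ℝ (α ν) p h * partialSnd T (constrainedState α p) (Fin.natAdd m ν) := by
  rw [reduced, fderiv_comp p hT (differentiableAt_constrainedState hα),
    ContinuousLinearMap.comp_apply, fderiv_constrainedState_apply hα, fderiv_apply_eq_sum_partial,
    add_assoc]
  congr 1
  rw [Fin.sum_univ_add]
  simp only [Fin.append_left, Fin.append_right]

theorem partialSnd_reduced {T : (Fin (m + k) → ℝ) × (Fin (m + k) → ℝ) → ℝ}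
    {p : (Fin (m + k) → ℝ) × (Fin m → ℝ)} (hT : DifferentiableAt ℝ T (constrainedState α p))
    (hα : ∀ ν, DifferentiableAt ℝ (α ν) p) (i : Fin m) :
    partialSnd (reduced T α) p i =
      partialSnd T (constrainedState α p) (Fin.castAdd k i)
        + ∑ ν, partialSnd (α ν) p i * partialSnd T (constrainedState α p) (Fin.natAdd m ν) := by
  simp [partialSnd, fderiv_reduced_apply hT hα, Pi.single_apply]

theorem partialFst_reduced {T : (Fin (m + k) → ℝ) × (Fin (m + k) → ℝ) → ℝ}
    {p : (Fin (m + k) → ℝ) × (Fin m → ℝ)} (hT : DifferentiableAt ℝ T (constrainedState α p))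
    (hα : ∀ ν, DifferentiableAt ℝ (α ν) p) (l : Fin (m + k)) :
    partialFst (reduced T α) p l =
      partialFst T (constrainedState α p) l
        + ∑ ν, partialFst (α ν) p l * partialSnd T (constrainedState α p) (Fin.natAdd m ν) := by
  simp [partialFst, fderiv_reduced_apply hT hα, Pi.single_apply]

variable {q : ℝ → Fin (m + k) → ℝ} {u : ℝ → Fin m → ℝ} {t : ℝ}

theorem hasDerivAt_constrainedCurve (hq : DifferentiableAt ℝ q t) (hu : DifferentiableAt ℝ u t)
    (hconstr1 : ∀ r, deriv (fun τ => q τ (Fin.castAdd k r)) t = u t r)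
    (hconstr2 : ∀ ν, deriv (fun τ => q τ (Fin.natAdd m ν)) t = α ν (q t, u t)) :
    HasDerivAt (fun τ => (q τ, u τ))
      (Fin.append (u t) (fun ν => α ν (q t, u t)), fun r => deriv (fun τ => u τ r) t) t := by
  refine HasDerivAt.prodMk (hasDerivAt_pi.2 fun j => ?_) (hasDerivAt_pi.2 fun r => ?_)
  · induction j using Fin.addCases with
    | left r => simpa [hconstr1] using (differentiableAt_pi.1 hq (Fin.castAdd k r)).hasDerivAt
    | right ν => simpa [hconstr2] using (differentiableAt_pi.1 hq (Fin.natAdd m ν)).hasDerivAt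
  · exact (differentiableAt_pi.1 hu r).hasDerivAt

theorem deriv_comp_constrainedCurve {f : (Fin (m + k) → ℝ) × (Fin m → ℝ) → ℝ}
    (hf : DifferentiableAt ℝ f (q t, u t)) (hq : DifferentiableAt ℝ q t)
    (hu : DifferentiableAt ℝ u t)
    (hconstr1 : ∀ r, deriv (fun τ => q τ (Fin.castAdd k r)) t = u t r)
    (hconstr2 : ∀ ν, deriv (fun τ => q τ (Fin.natAdd m ν)) t = α ν (q t, u t)) :
    deriv (fun τ => f (q τ, u τ)) t =
      ∑ r, (partialFst f (q t, u t) (Fin.castAdd k r) * u t r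
          + partialSnd f (q t, u t) r * deriv (fun τ => u τ r) t)
        + ∑ ν, partialFst f (q t, u t) (Fin.natAdd m ν) * α ν (q t, u t) := by
  rw [← Function.comp_def f, (hf.hasFDerivAt.comp_hasDerivAt t
    (hasDerivAt_constrainedCurve hq hu hconstr1 hconstr2)).deriv, fderiv_apply_eq_sum_partial,
    Fin.sum_univ_add]
  simp only [Fin.append_left, Fin.append_right, sum_add_distrib, mul_comm]
  ring

/-- The coefficient `B_i^ν` of the nonlinear Voronec equations at `p = (q, u)`, where `du = u̇`. -/
noncomputable def voronecCoeff (α : Fin k → (Fin (m + k) → ℝ) × (Fin m → ℝ) → ℝ) (i : Fin m)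
    (ν : Fin k) (p : (Fin (m + k) → ℝ) × (Fin m → ℝ)) (du : Fin m → ℝ) : ℝ :=
  (∑ r, (partialFst (fun p => partialSnd (α ν) p i) p (Fin.castAdd k r) * p.2 r
      + partialSnd (fun p => partialSnd (α ν) p i) p r * du r))
    - partialFst (α ν) p (Fin.castAdd k i)
    + ∑ σ, (partialFst (fun p => partialSnd (α ν) p i) p (Fin.natAdd m σ) * α σ p
      - partialSnd (α σ) p i * partialFst (α ν) p (Fin.natAdd m σ))

theorem voronecCoeff_eq_deriv_sub {i : Fin m} {ν : Fin k}
    (hαν : DifferentiableAt ℝ (fun p => partialSnd (α ν) p i) (q t, u t))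
    (hq : DifferentiableAt ℝ q t) (hu : DifferentiableAt ℝ u t)
    (hconstr1 : ∀ r, deriv (fun τ => q τ (Fin.castAdd k r)) t = u t r)
    (hconstr2 : ∀ σ, deriv (fun τ => q τ (Fin.natAdd m σ)) t = α σ (q t, u t)) :
    voronecCoeff α i ν (q t, u t) (fun r => deriv (fun τ => u τ r) t) =
      deriv (fun τ => partialSnd (α ν) (q τ, u τ) i) t
        - partialFst (α ν) (q t, u t) (Fin.castAdd k i)
        - ∑ σ, partialSnd (α σ) (q t, u t) i * partialFst (α ν) (q t, u t) (Fin.natAdd m σ) := by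
  rw [deriv_comp_constrainedCurve hαν hq hu hconstr1 hconstr2, voronecCoeff, sum_sub_distrib]
  ring

theorem voronec_lhs_eq_newton_lhs {T : (Fin (m + k) → ℝ) × (Fin (m + k) → ℝ) → ℝ}
    (hT : Differentiable ℝ T) (hα : ∀ ν, Differentiable ℝ (α ν)) (i : Fin m)
    (hαi : ∀ ν, DifferentiableAt ℝ (fun p => partialSnd (α ν) p i) (q t, u t))
    (hTv : ∀ l, DifferentiableAt ℝ (fun τ => partialSnd T (constrainedState α (q τ, u τ)) l) t)
    (hq : DifferentiableAt ℝ q t) (hu : DifferentiableAt ℝ u t)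
    (hconstr1 : ∀ r, deriv (fun τ => q τ (Fin.castAdd k r)) t = u t r)
    (hconstr2 : ∀ ν, deriv (fun τ => q τ (Fin.natAdd m ν)) t = α ν (q t, u t)) :
    deriv (fun τ => partialSnd (reduced T α) (q τ, u τ) i) t
        - partialFst (reduced T α) (q t, u t) (Fin.castAdd k i)
        - ∑ ν, partialFst (reduced T α) (q t, u t) (Fin.natAdd m ν)
            * partialSnd (α ν) (q t, u t) i
        - ∑ ν, partialSnd T (constrainedState α (q t, u t)) (Fin.natAdd m ν)
            * voronecCoeff α i ν (q t, u t) (fun r => deriv (fun τ => u τ r) t)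
      = deriv (fun τ => partialSnd T (constrainedState α (q τ, u τ)) (Fin.castAdd k i)) t
        - partialFst T (constrainedState α (q t, u t)) (Fin.castAdd k i)
        + ∑ ν, partialSnd (α ν) (q t, u t) i
            * (deriv (fun τ => partialSnd T (constrainedState α (q τ, u τ)) (Fin.natAdd m ν)) t
              - partialFst T (constrainedState α (q t, u t)) (Fin.natAdd m ν)) := by
  have ha : ∀ ν, DifferentiableAt ℝ (fun τ => partialSnd (α ν) (q τ, u τ) i) t :=
    fun ν => ((hαi ν).comp t (hq.prodMk hu) :)
  have hTu : (fun τ => partialSnd (reduced T α) (q τ, u τ) i) = fun τ =>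
      partialSnd T (constrainedState α (q τ, u τ)) (Fin.castAdd k i)
        + ∑ ν, partialSnd (α ν) (q τ, u τ) i
            * partialSnd T (constrainedState α (q τ, u τ)) (Fin.natAdd m ν) :=
    funext fun τ => partialSnd_reduced (hT _) (fun ν => hα ν _) i
  rw [hTu, deriv_fun_add (hTv _) (.fun_sum fun ν _ => (ha ν).fun_mul (hTv _)),
    deriv_fun_sum fun ν _ => (ha ν).fun_mul (hTv _)]
  simp only [deriv_fun_mul (ha _) (hTv _), partialFst_reduced (hT _) (fun ν => hα ν _),
    voronecCoeff_eq_deriv_sub (hαi _) hq hu hconstr1 hconstr2]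
  exact cancellation ..

end Constraints

section KineticEnergy

variable {E : Type*} [NormedAddCommGroup E] [NormedSpace ℝ E] {ι : Type*} [Fintype ι]

noncomputable def kineticEnergy (g : E → Matrix ι ι ℝ) (p : E × (ι → ℝ)) : ℝ :=
  1 / 2 * ∑ i, ∑ j, g p.1 i j * p.2 i * p.2 j

theorem fderiv_fst_mul_snd_mul_snd_apply_inr {c : E → ℝ} {p : E × (ι → ℝ)}
    (hc : DifferentiableAt ℝ c p.1) (i j : ι) (e : ι → ℝ) :
    fderiv ℝ (fun p : E × (ι → ℝ) => c p.1 * p.2 i * p.2 j) p (0, e)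
      = c p.1 * (e i * p.2 j + p.2 i * e j) := by
  have hfst : fderiv ℝ (fun p : E × (ι → ℝ) => c p.1) p (0, e) = 0 := by
    rw [← Function.comp_def c, fderiv_comp p hc differentiableAt_fst]
    simp [fderiv_fst]
  rw [fderiv_fun_mul (by fun_prop) (by fun_prop), fderiv_fun_mul (by fun_prop) (by fun_prop)]
  simp only [smul_add, add_apply, smul_apply, fderiv_snd_apply_apply, smul_eq_mul, hfst, mul_zero,
    add_zero]
  ring

variable {g : E → Matrix ι ι ℝ}

theorem fderiv_kineticEnergy_apply_inr {p : E × (ι → ℝ)}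
    (hg : ∀ i j, DifferentiableAt ℝ (fun z => g z i j) p.1) (e : ι → ℝ) :
    fderiv ℝ (kineticEnergy g) p (0, e) =
      1 / 2 * ∑ i, ∑ j, g p.1 i j * (e i * p.2 j + p.2 i * e j) := by
  unfold kineticEnergy
  rw [fderiv_const_mul (by fun_prop), _root_.smul_apply,
    fderiv_fun_sum fun i _ => by fun_prop, _root_.sum_apply, smul_eq_mul]
  congr 1
  refine sum_congr rfl fun i _ => ?_
  rw [fderiv_fun_sum fun j _ => by fun_prop, _root_.sum_apply]
  exact sum_congr rfl fun j _ => fderiv_fst_mul_snd_mul_snd_apply_inr (hg i j) i j e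

theorem differentiable_kineticEnergy (hg : ∀ i j, Differentiable ℝ fun z => g z i j) :
    Differentiable ℝ (kineticEnergy g) := by
  unfold kineticEnergy
  fun_prop

variable [DecidableEq ι]

theorem partialSnd_kineticEnergy {p : E × (ι → ℝ)}
    (hg : ∀ i j, DifferentiableAt ℝ (fun z => g z i j) p.1) (l : ι) :
    partialSnd (kineticEnergy g) p l = 1 / 2 * ∑ j, (g p.1 l j + g p.1 j l) * p.2 j := by
  rw [partialSnd, fderiv_kineticEnergy_apply_inr hg]
  simp [Pi.single_apply, mul_add, sum_add_distrib, add_mul]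

theorem differentiable_partialSnd_kineticEnergy (hg : ∀ i j, Differentiable ℝ fun z => g z i j)
    (l : ι) : Differentiable ℝ fun p => partialSnd (kineticEnergy g) p l := by
  simp_rw [partialSnd_kineticEnergy fun i j => hg i j _]
  fun_prop

end KineticEnergy

end Voronec

open Voronec in
theorem stmt_12_general (m k : ℕ)
    (g : (Fin (m + k) → ℝ) → Matrix (Fin (m + k)) (Fin (m + k)) ℝ)
    (hg : ∀ i j, ContDiff ℝ 1 (fun z => g z i j))
    (α : Fin k → (Fin (m + k) → ℝ) × (Fin m → ℝ) → ℝ) (hα : ∀ ν, ContDiff ℝ 2 (α ν))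
    (T : (Fin (m + k) → ℝ) × (Fin (m + k) → ℝ) → ℝ)
    (hT : T = fun p => (1 / 2) *
      ∑ i : Fin (m + k), ∑ j : Fin (m + k), g p.1 i j * p.2 i * p.2 j)
    (Tstar : (Fin (m + k) → ℝ) × (Fin m → ℝ) → ℝ)
    (hTstar : Tstar = fun p => T (p.1, Fin.append p.2 (fun ν => α ν p)))
    (q : ℝ → Fin (m + k) → ℝ) (u : ℝ → Fin m → ℝ)
    (hq : ContDiff ℝ 2 q) (hu : ContDiff ℝ 1 u)
    (hconstr1 : ∀ (t : ℝ) (j : Fin m), deriv (fun τ => q τ (Fin.castAdd k j)) t = u t j)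
    (hconstr2 : ∀ (t : ℝ) (σ : Fin k),
      deriv (fun τ => q τ (Fin.natAdd m σ)) t = α σ (q t, u t))
    (i : Fin m) (t : ℝ) :
    -- nonlinear Voronec form
    deriv (fun τ =>
        fderiv ℝ Tstar (q τ, u τ) ((0 : Fin (m + k) → ℝ), Pi.single i (1 : ℝ))) t
      - fderiv ℝ Tstar (q t, u t) (Pi.single (Fin.castAdd k i) (1 : ℝ), (0 : Fin m → ℝ))
      - (∑ ν : Fin k,
          fderiv ℝ Tstar (q t, u t) (Pi.single (Fin.natAdd m ν) (1 : ℝ), (0 : Fin m → ℝ))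
            * fderiv ℝ (α ν) (q t, u t) ((0 : Fin (m + k) → ℝ), Pi.single i (1 : ℝ)))
      - (∑ ν : Fin k,
          fderiv ℝ T (q t, Fin.append (u t) (fun ν' => α ν' (q t, u t)))
              ((0 : Fin (m + k) → ℝ), Pi.single (Fin.natAdd m ν) (1 : ℝ))
            * -- B_i^ν :
            ((∑ r : Fin m,
                (fderiv ℝ (fun p => fderiv ℝ (α ν) p ((0 : Fin (m + k) → ℝ), Pi.single i (1 : ℝ)))
                    (q t, u t) (Pi.single (Fin.castAdd k r) (1 : ℝ), (0 : Fin m → ℝ)) * u t r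
                  + fderiv ℝ (fun p => fderiv ℝ (α ν) p ((0 : Fin (m + k) → ℝ), Pi.single i (1 : ℝ)))
                    (q t, u t) ((0 : Fin (m + k) → ℝ), Pi.single r (1 : ℝ))
                    * deriv (fun τ => u τ r) t))
              - fderiv ℝ (α ν) (q t, u t) (Pi.single (Fin.castAdd k i) (1 : ℝ), (0 : Fin m → ℝ))
              + ∑ σ : Fin k,
                  (fderiv ℝ (fun p => fderiv ℝ (α ν) p ((0 : Fin (m + k) → ℝ), Pi.single i (1 : ℝ)))
                      (q t, u t) (Pi.single (Fin.natAdd m σ) (1 : ℝ), (0 : Fin m → ℝ))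
                      * α σ (q t, u t)
                    - fderiv ℝ (α σ) (q t, u t) ((0 : Fin (m + k) → ℝ), Pi.single i (1 : ℝ))
                      * fderiv ℝ (α ν) (q t, u t)
                          (Pi.single (Fin.natAdd m σ) (1 : ℝ), (0 : Fin m → ℝ)))))
    =
    -- projected Newton form
    deriv (fun τ =>
        fderiv ℝ T (q τ, Fin.append (u τ) (fun ν' => α ν' (q τ, u τ)))
          ((0 : Fin (m + k) → ℝ), Pi.single (Fin.castAdd k i) (1 : ℝ))) t
      - fderiv ℝ T (q t, Fin.append (u t) (fun ν' => α ν' (q t, u t)))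
          (Pi.single (Fin.castAdd k i) (1 : ℝ), (0 : Fin (m + k) → ℝ))
      + ∑ ν : Fin k,
          fderiv ℝ (α ν) (q t, u t) ((0 : Fin (m + k) → ℝ), Pi.single i (1 : ℝ))
            * (deriv (fun τ =>
                  fderiv ℝ T (q τ, Fin.append (u τ) (fun ν' => α ν' (q τ, u τ)))
                    ((0 : Fin (m + k) → ℝ), Pi.single (Fin.natAdd m ν) (1 : ℝ))) t
                - fderiv ℝ T (q t, Fin.append (u t) (fun ν' => α ν' (q t, u t)))
                    (Pi.single (Fin.natAdd m ν) (1 : ℝ), (0 : Fin (m + k) → ℝ))) := by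
  subst hT hTstar
  have hαd : ∀ ν, Differentiable ℝ (α ν) := fun ν => (hα ν).differentiable two_ne_zero
  have hgd : ∀ i j, Differentiable ℝ fun z => g z i j := fun i j =>
    (hg i j).differentiable one_ne_zero
  have hqd : Differentiable ℝ q := hq.differentiable two_ne_zero
  have hud : Differentiable ℝ u := hu.differentiable one_ne_zero
  have hstate : Differentiable ℝ fun τ => constrainedState α (q τ, u τ) := fun τ =>
    ((differentiableAt_constrainedState fun ν => hαd ν _).comp τ ((hqd τ).prodMk (hud τ)) :)
  have hαi : ∀ ν, Differentiable ℝ fun p => partialSnd (α ν) p i := fun ν =>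
    (((hα ν).fderiv_right (m := 1) (by norm_num)).clm_apply contDiff_const).differentiable
      one_ne_zero
  exact voronec_lhs_eq_newton_lhs (differentiable_kineticEnergy hgd) hαd i (fun ν => hαi ν _)
    (fun l => ((differentiable_partialSnd_kineticEnergy hgd l _).comp t (hstate t) :))
    (hqd t) (hud t) (hconstr1 t) (hconstr2 t)

/-- Proposition 3.1 (central identity): along constrained motions, the nonlinear
Voronec left-hand side (expressed through the reduced kinetic energy `T*` and the
coefficients `B_i^ν`) coincides with the projected Newton left-hand side. -/
theorem stmt_12 (m k : ℕ)
    (g : (Fin (m + k) → ℝ) → Matrix (Fin (m + k)) (Fin (m + k)) ℝ)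
    (hg : ∀ i j, ContDiff ℝ 1 (fun z => g z i j)) (hsymm : ∀ z, (g z).IsSymm)
    (α : Fin k → (Fin (m + k) → ℝ) × (Fin m → ℝ) → ℝ) (hα : ∀ ν, ContDiff ℝ 2 (α ν))
    (T : (Fin (m + k) → ℝ) × (Fin (m + k) → ℝ) → ℝ)
    (hT : T = fun p => (1 / 2) *
      ∑ i : Fin (m + k), ∑ j : Fin (m + k), g p.1 i j * p.2 i * p.2 j)
    (Tstar : (Fin (m + k) → ℝ) × (Fin m → ℝ) → ℝ)
    (hTstar : Tstar = fun p => T (p.1, Fin.append p.2 (fun ν => α ν p)))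
    (q : ℝ → Fin (m + k) → ℝ) (u : ℝ → Fin m → ℝ)
    (hq : ContDiff ℝ 2 q) (hu : ContDiff ℝ 1 u)
    (hconstr1 : ∀ (t : ℝ) (j : Fin m), deriv (fun τ => q τ (Fin.castAdd k j)) t = u t j)
    (hconstr2 : ∀ (t : ℝ) (σ : Fin k),
      deriv (fun τ => q τ (Fin.natAdd m σ)) t = α σ (q t, u t))
    (i : Fin m) (t : ℝ) :
    -- nonlinear Voronec form
    deriv (fun τ =>
        fderiv ℝ Tstar (q τ, u τ) ((0 : Fin (m + k) → ℝ), Pi.single i (1 : ℝ))) t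
      - fderiv ℝ Tstar (q t, u t) (Pi.single (Fin.castAdd k i) (1 : ℝ), (0 : Fin m → ℝ))
      - (∑ ν : Fin k,
          fderiv ℝ Tstar (q t, u t) (Pi.single (Fin.natAdd m ν) (1 : ℝ), (0 : Fin m → ℝ))
            * fderiv ℝ (α ν) (q t, u t) ((0 : Fin (m + k) → ℝ), Pi.single i (1 : ℝ)))
      - (∑ ν : Fin k,
          fderiv ℝ T (q t, Fin.append (u t) (fun ν' => α ν' (q t, u t)))
              ((0 : Fin (m + k) → ℝ), Pi.single (Fin.natAdd m ν) (1 : ℝ))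
            * -- B_i^ν :
            ((∑ r : Fin m,
                (fderiv ℝ (fun p => fderiv ℝ (α ν) p ((0 : Fin (m + k) → ℝ), Pi.single i (1 : ℝ)))
                    (q t, u t) (Pi.single (Fin.castAdd k r) (1 : ℝ), (0 : Fin m → ℝ)) * u t r
                  + fderiv ℝ (fun p => fderiv ℝ (α ν) p ((0 : Fin (m + k) → ℝ), Pi.single i (1 : ℝ)))
                    (q t, u t) ((0 : Fin (m + k) → ℝ), Pi.single r (1 : ℝ))
                    * deriv (fun τ => u τ r) t))
              - fderiv ℝ (α ν) (q t, u t) (Pi.single (Fin.castAdd k i) (1 : ℝ), (0 : Fin m → ℝ))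
              + ∑ σ : Fin k,
                  (fderiv ℝ (fun p => fderiv ℝ (α ν) p ((0 : Fin (m + k) → ℝ), Pi.single i (1 : ℝ)))
                      (q t, u t) (Pi.single (Fin.natAdd m σ) (1 : ℝ), (0 : Fin m → ℝ))
                      * α σ (q t, u t)
                    - fderiv ℝ (α σ) (q t, u t) ((0 : Fin (m + k) → ℝ), Pi.single i (1 : ℝ))
                      * fderiv ℝ (α ν) (q t, u t)
                          (Pi.single (Fin.natAdd m σ) (1 : ℝ), (0 : Fin m → ℝ)))))
    =
    -- projected Newton form
    deriv (fun τ =>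
        fderiv ℝ T (q τ, Fin.append (u τ) (fun ν' => α ν' (q τ, u τ)))
          ((0 : Fin (m + k) → ℝ), Pi.single (Fin.castAdd k i) (1 : ℝ))) t
      - fderiv ℝ T (q t, Fin.append (u t) (fun ν' => α ν' (q t, u t)))
          (Pi.single (Fin.castAdd k i) (1 : ℝ), (0 : Fin (m + k) → ℝ))
      + ∑ ν : Fin k,
          fderiv ℝ (α ν) (q t, u t) ((0 : Fin (m + k) → ℝ), Pi.single i (1 : ℝ))
            * (deriv (fun τ =>
                  fderiv ℝ T (q τ, Fin.append (u τ) (fun ν' => α ν' (q τ, u τ)))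
                    ((0 : Fin (m + k) → ℝ), Pi.single (Fin.natAdd m ν) (1 : ℝ))) t
                - fderiv ℝ T (q t, Fin.append (u t) (fun ν' => α ν' (q t, u t)))
                    (Pi.single (Fin.natAdd m ν) (1 : ℝ), (0 : Fin (m + k) → ℝ))) :=
  stmt_12_general m k g hg α hα T hT Tstar hTstar q u hq hu hconstr1 hconstr2 i t
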